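/- Let α : ℝ²×ℝ² → ℝ and b⃗ = (b1,b2,b3) : ℝ²×ℝ² → ℝ³ be smooth, and set b = b1σ1 + b2σ2 + b3σ3 and g⁽¹⁾(β) = β·e^{βα}·b. Then for all β and all (r,p): (1/2)( b·g⁽¹⁾(β) + g⁽¹⁾(β)·b ) = β·e^{βα}·|b⃗|²·σ0. Consequently, if a scalar function G(β,r,p) satisfies ∂_β G = α·G + (1/2)( α #⁽²⁾ e^{βα} + e^{βα} #⁽²⁾ α ) with G(0,·,·) = 0, then g⁽²⁾(β) := ( G(β) + (β²|b⃗|²/2)·e^{βα} )·σ0 satisfies g⁽²⁾(0) = 0 and ∂_β g⁽²⁾ = α·g⁽²⁾ + (1/2)( α #⁽²⁾ e^{βα} + e^{βα} #⁽²⁾ α )·σ0 + (1/2)( b·g⁽¹⁾(β) + g⁽¹⁾(β)·b ). -/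

import Mathlib

/-- The Pauli matrices σ0, σ1, σ2, σ3 as 2×2 complex matrices. -/
noncomputable def pauli : Fin 4 → Matrix (Fin 2) (Fin 2) ℂ :=
  ![!![1, 0; 0, 1], !![0, 1; 1, 0], !![0, -Complex.I; Complex.I, 0], !![1, 0; 0, -1]]

/-- Phase space `ℝ²×ℝ²` of positions `r` and momenta `p`. -/
abbrev PhaseSpace : Type := (Fin 2 → ℝ) × (Fin 2 → ℝ)

/-- Unit vector in the position direction `r_s`. -/
def er (s : Fin 2) : PhaseSpace := (Pi.single s 1, 0)

/-- Unit vector in the momentum direction `p_s`. -/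
def ep (s : Fin 2) : PhaseSpace := (0, Pi.single s 1)

/-- Second partial derivative of a real-valued `f` in the directions `u` then `v`. -/
noncomputable def pd2 (u v : PhaseSpace) (f : PhaseSpace → ℝ) (x : PhaseSpace) : ℝ :=
  fderiv ℝ (fun y => fderiv ℝ f y u) x v

/-- Second-order Moyal term `f #⁽²⁾ g` for real scalar functions on phase space. -/
noncomputable def moyal2R (f g : PhaseSpace → ℝ) (x : PhaseSpace) : ℝ :=
  -(1 / 8 : ℝ) * ∑ j : Fin 2, ∑ s : Fin 2,
    (pd2 (er j) (er s) f x * pd2 (ep j) (ep s) g x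
      - 2 * pd2 (er j) (ep s) f x * pd2 (ep j) (er s) g x
      + pd2 (ep j) (ep s) f x * pd2 (er j) (er s) g x)

/-- in the Strongly Mixed State regime the symmetrized product
`(1/2)(b g⁽¹⁾ + g⁽¹⁾ b)` is the scalar matrix `β e^{βα}|b⃗|² σ0`, and consequently
`g⁽²⁾(β) = (G(β) + (β²|b⃗|²/2)e^{βα})σ0` satisfies the second-order equation (gbeta2-f). -/
theorem sms_second_order_reduction (α : PhaseSpace → ℝ) (bv : PhaseSpace → Fin 3 → ℝ)
    (hα : ContDiff ℝ (⊤ : ℕ∞) α) (hbv : ContDiff ℝ (⊤ : ℕ∞) bv) :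
    let bmat : PhaseSpace → Matrix (Fin 2) (Fin 2) ℂ := fun x =>
      (bv x 0 : ℂ) • pauli 1 + (bv x 1 : ℂ) • pauli 2 + (bv x 2 : ℂ) • pauli 3
    let nb2 : PhaseSpace → ℝ := fun x => bv x 0 ^ 2 + bv x 1 ^ 2 + bv x 2 ^ 2
    let g1 : ℝ → PhaseSpace → Matrix (Fin 2) (Fin 2) ℂ := fun β x =>
      ((β * Real.exp (β * α x) : ℝ) : ℂ) • bmat x
    -- first claim
    (∀ β : ℝ, ∀ x : PhaseSpace,
      (1 / 2 : ℂ) • (bmat x * g1 β x + g1 β x * bmat x) =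
        ((β * Real.exp (β * α x) * nb2 x : ℝ) : ℂ) • pauli 0) ∧
    -- second claim
    (∀ G : ℝ → PhaseSpace → ℝ,
      (∀ x, G 0 x = 0) →
      (∀ β : ℝ, ∀ x : PhaseSpace,
        HasDerivAt (fun b => G b x)
          (α x * G β x + (1 / 2) *
            (moyal2R α (fun y => Real.exp (β * α y)) x
              + moyal2R (fun y => Real.exp (β * α y)) α x)) β) →
      let g2 : ℝ → PhaseSpace → Matrix (Fin 2) (Fin 2) ℂ := fun β x =>
        ((G β x + β ^ 2 * nb2 x / 2 * Real.exp (β * α x) : ℝ) : ℂ) • pauli 0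
      (∀ x, g2 0 x = 0) ∧
      (∀ β : ℝ, ∀ x : PhaseSpace, ∀ i j : Fin 2,
        HasDerivAt (fun b => g2 b x i j)
          (((α x : ℂ) • g2 β x
            + (((1 / 2) * (moyal2R α (fun y => Real.exp (β * α y)) x
                + moyal2R (fun y => Real.exp (β * α y)) α x) : ℝ) : ℂ) • pauli 0
            + (1 / 2 : ℂ) • (bmat x * g1 β x + g1 β x * bmat x)) i j) β)) := by

  intro bmat nb2 g1
  have hfirst : ∀ β : ℝ, ∀ x : PhaseSpace,
      (1 / 2 : ℂ) • (bmat x * g1 β x + g1 β x * bmat x) =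
        ((β * Real.exp (β * α x) * nb2 x : ℝ) : ℂ) • pauli 0 := by
    intro β x
    ext i j
    fin_cases i <;> fin_cases j <;>
      simp [bmat, g1, nb2, pauli, Matrix.mul_apply, Fin.sum_univ_succ,
        Matrix.smul_apply, Matrix.add_apply] <;>
      push_cast <;> ring_nf <;> simp [Complex.I_sq] <;> push_cast <;> ring
  refine ⟨hfirst, ?_⟩
  intro G hG0 hGd g2
  constructor
  · intro x
    ext i j
    simp [g2, hG0]
  · intro β x i j
    have h2 : HasDerivAt (fun b : ℝ => b ^ 2 * nb2 x / 2 * Real.exp (b * α x))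
        (β * nb2 x * Real.exp (β * α x)
          + β ^ 2 * nb2 x / 2 * (α x * Real.exp (β * α x))) β := by
      have ha : HasDerivAt (fun b : ℝ => b ^ 2 * nb2 x / 2) (β * nb2 x) β := by
        have := ((hasDerivAt_pow 2 β).mul_const (nb2 x)).div_const 2
        exact this.congr_deriv (by push_cast; ring)
      have hb : HasDerivAt (fun b : ℝ => Real.exp (b * α x))
          (α x * Real.exp (β * α x)) β := by
        have := (Real.hasDerivAt_exp (β * α x)).comp β ((hasDerivAt_id β).mul_const (α x))
        exact this.congr_deriv (by ring)
      have := ha.mul hb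
      exact this.congr_deriv (by ring)
    have hsum := (hGd β x).add h2
    have hC : HasDerivAt (fun b : ℝ =>
        ((G b x + b ^ 2 * nb2 x / 2 * Real.exp (b * α x) : ℝ) : ℂ) * pauli 0 i j)
        (((α x * G β x + (1 / 2) *
            (moyal2R α (fun y => Real.exp (β * α y)) x
              + moyal2R (fun y => Real.exp (β * α y)) α x)
          + (β * nb2 x * Real.exp (β * α x)
            + β ^ 2 * nb2 x / 2 * (α x * Real.exp (β * α x))) : ℝ) : ℂ) * pauli 0 i j) β :=
      (hsum.ofReal_comp).mul_const _
    have hfun : (fun b : ℝ => g2 b x i j) = fun b : ℝ =>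
        ((G b x + b ^ 2 * nb2 x / 2 * Real.exp (b * α x) : ℝ) : ℂ) * pauli 0 i j := by
      funext b
      simp [g2, Matrix.smul_apply, smul_eq_mul]
    rw [hfun]
    convert hC using 1
    rw [hfirst β x]
    simp only [g2, Matrix.add_apply, Matrix.smul_apply, smul_eq_mul]
    push_cast
    ring
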